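/- arXiv:1706.03333 — 15 statements merged into one kernel-verified Lean document; each statement's English description precedes it below -/
import Mathlib

section
/- For all real t > 0 and all v with 0 ≤ v ≤ 1, we have ((1-v) + v·t)/t^v ≤ exp(v·(1-v)·(t-1)²/t). -/
/-! Write `A = (1 - v) + v t`. Then `log (A / t ^ v) = (1 - v) log A + v log (A / t)`, and bounding
both logarithms by `log y ≤ y - 1` gives `(1 - v) (A - 1) + v (A / t - 1) = v (1 - v) (t - 1)² / t`. -/

open Real

lemma convex_combination_pos {v a b : ℝ} (ha : 0 < a) (hb : 0 < b) (hv0 : 0 ≤ v) (hv1 : v ≤ 1) :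
    0 < (1 - v) * a + v * b := by
  rcases hv0.lt_or_eq with hv | rfl
  · nlinarith
  · simpa using ha

lemma weighted_log_le_weighted_sub_one {v x y : ℝ} (hx : 0 < x) (hy : 0 < y) (hv0 : 0 ≤ v)
    (hv1 : v ≤ 1) : (1 - v) * log x + v * log y ≤ (1 - v) * (x - 1) + v * (y - 1) :=
  add_le_add (mul_le_mul_of_nonneg_left (log_le_sub_one_of_pos hx) (sub_nonneg.2 hv1))
    (mul_le_mul_of_nonneg_left (log_le_sub_one_of_pos hy) hv0)

theorem stmt0 (t v : ℝ) (ht : 0 < t) (hv0 : 0 ≤ v) (hv1 : v ≤ 1) :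
    ((1 - v) + v * t) / t ^ v ≤ Real.exp (v * (1 - v) * (t - 1) ^ 2 / t) := by
  set A := (1 - v) + v * t with hA_def
  have hA : 0 < A := by simpa using convex_combination_pos one_pos ht hv0 hv1
  have hlog_ratio : log (A / t ^ v) = (1 - v) * log A + v * log (A / t) := by
    rw [log_div hA.ne' (rpow_pos_of_pos ht v).ne', log_rpow ht, log_div hA.ne' ht.ne']
    ring
  have hbound : (1 - v) * (A - 1) + v * (A / t - 1) = v * (1 - v) * (t - 1) ^ 2 / t := by
    rw [hA_def]
    field_simp
    ring
  calc A / t ^ v = exp (log (A / t ^ v)) := (exp_log (div_pos hA (rpow_pos_of_pos ht v))).symm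
    _ ≤ exp (v * (1 - v) * (t - 1) ^ 2 / t) := by
      rw [exp_le_exp, hlog_ratio, ← hbound]
      exact weighted_log_le_weighted_sub_one hA (div_pos hA ht) hv0 hv1
end

section
/- For all real t > 0 and all v with 0 ≤ v ≤ 1, we have t^(v-1)·(t+1)·exp(v·(1-v)·(t-1)²/t) ≥ 1. -/
open Real

theorem stmt1 (t v : ℝ) (ht : 0 < t) (hv0 : 0 ≤ v) (hv1 : v ≤ 1) :
    t ^ (v - 1) * (t + 1) * Real.exp (v * (1 - v) * (t - 1) ^ 2 / t) ≥ 1 := by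
  have h1 : t ^ (1 - v) ≤ t + 1 := by
    rcases le_or_gt 1 t with h | h
    · calc t ^ (1 - v) ≤ t ^ (1 : ℝ) :=
            Real.rpow_le_rpow_of_exponent_le h (by linarith)
        _ = t := Real.rpow_one t
        _ ≤ t + 1 := by linarith
    · calc t ^ (1 - v) ≤ t ^ (0 : ℝ) :=
            Real.rpow_le_rpow_of_exponent_ge ht h.le (by linarith)
        _ = 1 := Real.rpow_zero t
        _ ≤ t + 1 := by linarith
  have h2 : (1 : ℝ) ≤ t ^ (v - 1) * (t + 1) := by
    have hpos : 0 < t ^ (1 - v) := Real.rpow_pos_of_pos ht _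
    have he : t ^ (v - 1) = (t ^ (1 - v))⁻¹ := by
      rw [← Real.rpow_neg ht.le, neg_sub]
    rw [he, inv_mul_eq_div, le_div_iff₀ hpos, one_mul]
    exact h1
  have h3 : (1 : ℝ) ≤ Real.exp (v * (1 - v) * (t - 1) ^ 2 / t) := by
    rw [Real.one_le_exp_iff]
    exact div_nonneg (mul_nonneg (mul_nonneg hv0 (by linarith)) (sq_nonneg _)) ht.le
  calc (1:ℝ) = 1 * 1 := by ring
    _ ≤ t ^ (v - 1) * (t + 1) * Real.exp (v * (1 - v) * (t - 1) ^ 2 / t) :=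
        mul_le_mul h2 h3 zero_le_one (by positivity)
end

section
/- For all real t with 0 < t ≤ 1 and all v with 0 ≤ v ≤ 1, exp(v·(1-v)·(t-1)²/2) ≤ ((1-v) + v·t)/t^v. -/
open Real Set

/-!
Taking logarithms, the claim is `0 ≤ youngGap v t`. The gap vanishes at `s = 1` and decreases on
`(0, 1]`: there both `s` and the arithmetic mean `(1 - v) + v s` are at most `1`, which makes its
derivative nonpositive.
-/

/-- The logarithm of the Young ratio `((1 - v) + v s) / s ^ v`, minus its claimed lower bound. -/
noncomputable def youngGap (v s : ℝ) : ℝ :=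
  log (1 - v + v * s) - v * log s - v * (1 - v) * (s - 1) ^ 2 / 2

section

variable {v s : ℝ}

lemma one_sub_add_mul_pos (hv0 : 0 ≤ v) (hv1 : v ≤ 1) (hs : 0 < s) : 0 < 1 - v + v * s := by
  nlinarith [mul_nonneg hv0 hs.le]

lemma youngGap_one (v : ℝ) : youngGap v 1 = 0 := by
  simp [youngGap]

/-- The factorisation comes from `v / A - v / s = v (1 - v) (s - 1) / (A s)` with `A = 1 - v + v s`. -/
lemma hasDerivAt_youngGap (hs : 0 < s) (hA : 0 < 1 - v + v * s) :
    HasDerivAt (youngGap v)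
      (v * (1 - v) * (s - 1) * (1 / ((1 - v + v * s) * s) - 1)) s := by
  have hmean : HasDerivAt (fun x => log (1 - v + v * x)) (v / (1 - v + v * s)) s := by
    simpa using (((hasDerivAt_id s).const_mul v).const_add (1 - v)).log hA.ne'
  have hgeom : HasDerivAt (fun x => v * log x) (v * s⁻¹) s :=
    (hasDerivAt_log hs.ne').const_mul v
  have hquad : HasDerivAt (fun x => v * (1 - v) * (x - 1) ^ 2 / 2) (v * (1 - v) * (s - 1)) s :=
    ((((hasDerivAt_id' s).sub_const 1).fun_pow 2).const_mul (v * (1 - v))).div_const 2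
      |>.congr_deriv (by ring)
  exact ((hmean.sub hgeom).sub hquad).congr_deriv (by field_simp; ring)

lemma youngGap_deriv_nonpos (hv0 : 0 ≤ v) (hv1 : v ≤ 1) (hs0 : 0 < s) (hs1 : s ≤ 1) :
    v * (1 - v) * (s - 1) * (1 / ((1 - v + v * s) * s) - 1) ≤ 0 := by
  have hA := one_sub_add_mul_pos hv0 hv1 hs0
  have hAs : (1 - v + v * s) * s ≤ 1 := by nlinarith [mul_nonneg hv0 (sub_nonneg.2 hs1)]
  have hinv : 1 ≤ 1 / ((1 - v + v * s) * s) := by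
    rw [le_div_iff₀ (by positivity)]
    linarith
  exact mul_nonpos_of_nonpos_of_nonneg
    (mul_nonpos_of_nonneg_of_nonpos (mul_nonneg hv0 (sub_nonneg.2 hv1)) (by linarith))
    (by linarith)

lemma antitoneOn_youngGap (hv0 : 0 ≤ v) (hv1 : v ≤ 1) : AntitoneOn (youngGap v) (Ioc 0 1) := by
  have hderiv : ∀ x ∈ Ioc (0 : ℝ) 1, HasDerivAt (youngGap v)
      (v * (1 - v) * (x - 1) * (1 / ((1 - v + v * x) * x) - 1)) x :=
    fun x hx => hasDerivAt_youngGap hx.1 (one_sub_add_mul_pos hv0 hv1 hx.1)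
  apply antitoneOn_of_deriv_nonpos (convex_Ioc 0 1)
  · exact fun x hx => (hderiv x hx).continuousAt.continuousWithinAt
  · rw [interior_Ioc]
    exact fun x hx => (hderiv x (Ioo_subset_Ioc_self hx)).differentiableAt.differentiableWithinAt
  · rw [interior_Ioc]
    intro x hx
    rw [(hderiv x (Ioo_subset_Ioc_self hx)).deriv]
    exact youngGap_deriv_nonpos hv0 hv1 hx.1 hx.2.le

lemma youngGap_nonneg (hv0 : 0 ≤ v) (hv1 : v ≤ 1) (hs0 : 0 < s) (hs1 : s ≤ 1) :
    0 ≤ youngGap v s := by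
  simpa [youngGap_one] using
    antitoneOn_youngGap hv0 hv1 ⟨hs0, hs1⟩ (right_mem_Ioc.2 zero_lt_one) hs1

end

theorem stmt2 (t v : ℝ) (ht0 : 0 < t) (ht1 : t ≤ 1) (hv0 : 0 ≤ v) (hv1 : v ≤ 1) :
    Real.exp (v * (1 - v) * (t - 1) ^ 2 / 2) ≤ ((1 - v) + v * t) / t ^ v := by
  have hgap := youngGap_nonneg hv0 hv1 ht0 ht1
  rw [youngGap] at hgap
  calc Real.exp (v * (1 - v) * (t - 1) ^ 2 / 2)
      ≤ Real.exp (log (1 - v + v * t) - v * log t) := exp_le_exp.2 (by linarith)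
    _ = (1 - v + v * t) / t ^ v := by
        rw [exp_sub, exp_log (one_sub_add_mul_pos hv0 hv1 ht0), rpow_def_of_pos ht0,
          mul_comm (log t)]
end

section
/- For all real t with 0 < t ≤ 1 and all v with 0 ≤ v ≤ 1, ((1-v) + v·t)/t^v ≤ exp(v·(1-v)·(1/t - 1)²/2). -/
open Real

theorem stmt3 (t v : ℝ) (ht0 : 0 < t) (ht1 : t ≤ 1) (hv0 : 0 ≤ v) (hv1 : v ≤ 1) :
    ((1 - v) + v * t) / t ^ v ≤ Real.exp (v * (1 - v) * (1 / t - 1) ^ 2 / 2) := by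
  set c : ℝ := (1 / t - 1) ^ 2 with hc
  set g : ℝ → ℝ := fun x => x * (1 - x) * (c / 2) - Real.log (1 + x * (t - 1)) + x * Real.log t
    with hg
  set g' : ℝ → ℝ := fun x => (1 - 2 * x) * (c / 2) - (t - 1) / (1 + x * (t - 1)) + Real.log t
    with hg'
  set g'' : ℝ → ℝ := fun x => -c + (t - 1) ^ 2 / (1 + x * (t - 1)) ^ 2 with hg''
  -- positivity of u on Icc
  have hupos : ∀ x ∈ Set.Icc (0:ℝ) 1, 0 < 1 + x * (t - 1) := by
    intro x hx
    obtain ⟨hx0, hx1⟩ := hx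
    nlinarith
  have hint : interior (Set.Icc (0:ℝ) 1) = Set.Ioo 0 1 := interior_Icc
  have hconc : ConcaveOn ℝ (Set.Icc (0:ℝ) 1) g := by
    apply concaveOn_of_hasDerivWithinAt2_nonpos (convex_Icc 0 1) (f' := g') (f'' := g'')
    · -- continuity
      apply ContinuousOn.add
      apply ContinuousOn.sub
      · fun_prop
      · apply ContinuousOn.log
        · fun_prop
        · intro x hx; exact ne_of_gt (hupos x hx)
      · fun_prop
    · intro x hx
      rw [hint] at hx
      have hune : (1 + x * (t - 1)) ≠ 0 := ne_of_gt (hupos x (Set.mem_Icc.2 ⟨le_of_lt hx.1, le_of_lt hx.2⟩))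
      have hu : HasDerivAt (fun x : ℝ => 1 + x * (t - 1)) (t - 1) x := by
        simpa using ((hasDerivAt_id x).mul_const (t - 1)).const_add 1
      have h1 : HasDerivAt (fun x : ℝ => x * (1 - x) * (c / 2))
          ((1 * (1 - x) + x * (0 - 1)) * (c / 2)) x :=
        ((hasDerivAt_id x).mul ((hasDerivAt_const x 1).sub (hasDerivAt_id x))).mul_const _
      have h2 : HasDerivAt (fun x : ℝ => Real.log (1 + x * (t - 1)))
          ((t - 1) / (1 + x * (t - 1))) x := hu.log hune
      have h3 : HasDerivAt (fun x : ℝ => x * Real.log t) (Real.log t) x := by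
        simpa using (hasDerivAt_id x).mul_const (Real.log t)
      have := (h1.sub h2).add h3
      have heq : (1 * (1 - x) + x * (0 - 1)) * (c / 2) - (t - 1) / (1 + x * (t - 1))
          + Real.log t = g' x := by rw [hg']; ring
      rw [heq] at this
      exact this.hasDerivWithinAt
    · intro x hx
      rw [hint] at hx
      have hune : (1 + x * (t - 1)) ≠ 0 := ne_of_gt (hupos x (Set.mem_Icc.2 ⟨le_of_lt hx.1, le_of_lt hx.2⟩))
      have hu : HasDerivAt (fun x : ℝ => 1 + x * (t - 1)) (t - 1) x := by
        simpa using ((hasDerivAt_id x).mul_const (t - 1)).const_add 1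
      have h1 : HasDerivAt (fun x : ℝ => (1 - 2 * x) * (c / 2)) ((0 - 2 * 1) * (c / 2)) x :=
        ((hasDerivAt_const x 1).sub ((hasDerivAt_id x).const_mul 2)).mul_const _
      have h2 : HasDerivAt (fun x : ℝ => (t - 1) / (1 + x * (t - 1)))
          ((t - 1) * (-(t - 1) / (1 + x * (t - 1)) ^ 2)) x := by
        simpa [div_eq_mul_inv] using (hu.inv hune).const_mul (t - 1)
      have := (h1.sub h2).add (hasDerivAt_const x (Real.log t))
      have heq : (0 - 2 * 1) * (c / 2) - (t - 1) * (-(t - 1) / (1 + x * (t - 1)) ^ 2) + 0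
          = g'' x := by rw [hg'']; ring
      rw [heq] at this
      exact this.hasDerivWithinAt
    · intro x hx
      rw [hint] at hx
      have hxu : t ≤ 1 + x * (t - 1) := by nlinarith [hx.1, hx.2]
      have ht2 : (0:ℝ) < t ^ 2 := by positivity
      have hle : (t - 1) ^ 2 / (1 + x * (t - 1)) ^ 2 ≤ (t - 1) ^ 2 / t ^ 2 := by
        apply div_le_div_of_nonneg_left (by positivity) ht2
        nlinarith
      have hceq : c = (t - 1) ^ 2 / t ^ 2 := by
        rw [hc]; field_simp; ring
      rw [hg'']
      simp only
      rw [hceq]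
      linarith
  -- apply concavity at endpoints
  have h0 : (0:ℝ) ∈ Set.Icc (0:ℝ) 1 := by norm_num
  have h1 : (1:ℝ) ∈ Set.Icc (0:ℝ) 1 := by norm_num
  have key := hconc.2 h0 h1 (by linarith : (0:ℝ) ≤ 1 - v) hv0 (by ring)
  have hg0 : g 0 = 0 := by simp [hg]
  have hg1 : g 1 = 0 := by simp [hg]
  rw [hg0, hg1] at key
  simp only [smul_eq_mul, mul_zero, add_zero, mul_one, zero_add] at key
  -- key : 0 ≤ g v  (after simp)
  have hgv : 0 ≤ g v := by
    have : (1 - v) * (0:ℝ) + v * 1 = v := by ring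
    simpa [this] using key
  -- now convert
  have hupos' : 0 < (1 - v) + v * t := by nlinarith
  have hrw : (1:ℝ) + v * (t - 1) = (1 - v) + v * t := by ring
  rw [hg] at hgv
  simp only at hgv
  rw [hrw] at hgv
  have hlog : Real.log ((1 - v) + v * t) ≤
      v * (1 - v) * (1 / t - 1) ^ 2 / 2 + Real.log t * v := by
    rw [← hc]; nlinarith [hgv]
  have htv : t ^ v = Real.exp (Real.log t * v) := Real.rpow_def_of_pos ht0 v
  rw [div_le_iff₀ (by positivity : (0:ℝ) < t ^ v), htv, ← Real.exp_add]
  calc (1 - v) + v * t = Real.exp (Real.log ((1 - v) + v * t)) := (Real.exp_log hupos').symm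
    _ ≤ _ := Real.exp_le_exp.2 hlog
end

section
/- For all real t ≥ 1 and all v with 0 ≤ v ≤ 1, exp(v·(1-v)·(1/t - 1)²/2) ≤ ((1-v) + v·t)/t^v. -/
/-!
Taking logarithms, the claim is `0 ≤ logGap v t`. Since `logGap v 1 = 0`, it suffices that
`logGap v` is monotone on `[1, ∞)`, and indeed its derivative at `x` is
`v (1 - v) (x - 1) (x² - ((1 - v) + v x)) / (((1 - v) + v x) x³)`,
where `x² ≥ x ≥ (1 - v) + v x` for `x ≥ 1`.
-/

open Real Set

namespace Dragomir

noncomputable def logGap (v x : ℝ) : ℝ :=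
  log ((1 - v) + v * x) - v * log x - v * (1 - v) * (1 / x - 1) ^ 2 / 2

lemma logGap_one (v : ℝ) : logGap v 1 = 0 := by
  simp [logGap]

lemma hasDerivAt_logGap {v x : ℝ} (hx : x ≠ 0) (hA : (1 - v) + v * x ≠ 0) :
    HasDerivAt (logGap v)
      (v * (1 - v) * (x - 1) * (x ^ 2 - ((1 - v) + v * x)) / (((1 - v) + v * x) * x ^ 3)) x := by
  have hlin : HasDerivAt (fun y : ℝ => (1 - v) + v * y) v x := by
    simpa using ((hasDerivAt_id x).const_mul v).const_add (1 - v)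
  have hrecip : HasDerivAt (fun y : ℝ => 1 / y - 1) (-(x ^ 2)⁻¹) x := by
    simpa [one_div] using (hasDerivAt_inv hx).sub_const 1
  have h := ((hlin.log hA).sub ((hasDerivAt_log hx).const_mul v)).sub
    (((hrecip.pow 2).const_mul (v * (1 - v))).div_const 2)
  refine h.congr_deriv ?_
  norm_num
  field_simp
  ring

lemma one_sub_add_mul_le_sq {v x : ℝ} (hv1 : v ≤ 1) (hx : 1 ≤ x) :
    (1 - v) + v * x ≤ x ^ 2 := by
  nlinarith

lemma one_sub_add_mul_pos {v x : ℝ} (hv0 : 0 ≤ v) (hx : 1 ≤ x) :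
    0 < (1 - v) + v * x := by
  nlinarith

lemma monotoneOn_logGap {v : ℝ} (hv0 : 0 ≤ v) (hv1 : v ≤ 1) :
    MonotoneOn (logGap v) (Ici 1) := by
  have hderiv : ∀ x ∈ Ici (1 : ℝ), HasDerivAt (logGap v)
      (v * (1 - v) * (x - 1) * (x ^ 2 - ((1 - v) + v * x)) / (((1 - v) + v * x) * x ^ 3)) x :=
    fun x hx => hasDerivAt_logGap (by linarith [mem_Ici.1 hx])
      (one_sub_add_mul_pos hv0 hx).ne'
  refine monotoneOn_of_deriv_nonneg (convex_Ici 1)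
    (fun x hx => (hderiv x hx).continuousAt.continuousWithinAt)
    (fun x hx => (hderiv x (interior_subset hx)).differentiableAt.differentiableWithinAt)
    (fun x hx => ?_)
  rw [interior_Ici] at hx
  have hx1 : 1 ≤ x := hx.le
  rw [(hderiv x hx1).deriv]
  have hv1' : 0 ≤ 1 - v := sub_nonneg.2 hv1
  have hx1' : 0 ≤ x - 1 := sub_nonneg.2 hx1
  have hsq : 0 ≤ x ^ 2 - ((1 - v) + v * x) := sub_nonneg.2 (one_sub_add_mul_le_sq hv1 hx1)
  have hA := one_sub_add_mul_pos hv0 hx1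
  positivity

lemma logGap_nonneg {v t : ℝ} (hv0 : 0 ≤ v) (hv1 : v ≤ 1) (ht : 1 ≤ t) : 0 ≤ logGap v t :=
  logGap_one v ▸ monotoneOn_logGap hv0 hv1 self_mem_Ici ht ht

end Dragomir

theorem stmt4 (t v : ℝ) (ht : 1 ≤ t) (hv0 : 0 ≤ v) (hv1 : v ≤ 1) :
    Real.exp (v * (1 - v) * (1 / t - 1) ^ 2 / 2) ≤ ((1 - v) + v * t) / t ^ v := by
  have hgap := Dragomir.logGap_nonneg hv0 hv1 ht
  rw [Dragomir.logGap] at hgap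
  calc Real.exp (v * (1 - v) * (1 / t - 1) ^ 2 / 2)
      ≤ Real.exp (log ((1 - v) + v * t) - v * log t) := exp_le_exp.2 (by linarith)
    _ = ((1 - v) + v * t) / t ^ v := by
      rw [exp_sub, exp_log (Dragomir.one_sub_add_mul_pos hv0 ht),
        rpow_def_of_pos (by linarith), mul_comm (log t)]
end

section
/- For all real t ≥ 1 and all v with 0 ≤ v ≤ 1, ((1-v) + v·t)/t^v ≤ exp(v·(1-v)·(t-1)²/2). -/
/-!
Put `g s = log ((1 - v) + v s) - v log s`, the logarithm of the ratio on the left-hand side.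
Then `g 1 = 0` and `g' s = v (1 - v) (s - 1) / (s ((1 - v) + v s))`, whose denominator is at
least `1` for `s ≥ 1`; so `g' s ≤ v (1 - v) (s - 1)`, and integrating from `1` to `t` gives
`g t ≤ v (1 - v) (t - 1)² / 2`.
-/

open Real Set

theorem hasDerivAt_log_affine_sub_mul_log {v s : ℝ} (hs : 0 < s) (hq : 0 < 1 - v + v * s) :
    HasDerivAt (fun s => log (1 - v + v * s) - v * log s)
      (v * (1 - v) * (s - 1) / (s * (1 - v + v * s))) s := by
  have haff : HasDerivAt (fun s => 1 - v + v * s) v s := by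
    simpa using ((hasDerivAt_id s).const_mul v).const_add (1 - v)
  refine ((haff.log hq.ne').sub ((hasDerivAt_log hs.ne').const_mul v)).congr_deriv ?_
  field_simp
  ring

theorem mul_sub_one_div_mul_affine_le {v s : ℝ} (hs : 1 ≤ s) (hv0 : 0 ≤ v) (hv1 : v ≤ 1) :
    v * (1 - v) * (s - 1) / (s * (1 - v + v * s)) ≤ v * (1 - v) * (s - 1) := by
  have hden : 1 ≤ s * (1 - v + v * s) := one_le_mul_of_one_le_of_one_le hs (by nlinarith)
  have hnum : 0 ≤ v * (1 - v) * (s - 1) := by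
    have := sub_nonneg.2 hv1
    have := sub_nonneg.2 hs
    positivity
  exact div_le_self hnum hden

theorem log_affine_sub_mul_log_le {t v : ℝ} (ht : 1 ≤ t) (hv0 : 0 ≤ v) (hv1 : v ≤ 1) :
    log (1 - v + v * t) - v * log t ≤ v * (1 - v) * (t - 1) ^ 2 / 2 := by
  have hq : ∀ s, 1 ≤ s → 0 < 1 - v + v * s := fun s hs => by nlinarith
  have hderiv : ∀ s, 1 ≤ s → HasDerivAt
      (fun s => v * (1 - v) * (s - 1) ^ 2 / 2 - (log (1 - v + v * s) - v * log s))
      (v * (1 - v) * (s - 1) - v * (1 - v) * (s - 1) / (s * (1 - v + v * s))) s := by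
    intro s hs
    have hsq : HasDerivAt (fun s => v * (1 - v) * (s - 1) ^ 2 / 2) (v * (1 - v) * (s - 1)) s := by
      refine ((((hasDerivAt_id s).sub_const 1).pow 2).const_mul (v * (1 - v))).div_const 2
        |>.congr_deriv ?_
      simp only [id, Nat.cast_ofNat, mul_one]
      ring
    exact hsq.sub (hasDerivAt_log_affine_sub_mul_log (by linarith) (hq s hs))
  have hmono : MonotoneOn
      (fun s => v * (1 - v) * (s - 1) ^ 2 / 2 - (log (1 - v + v * s) - v * log s)) (Ici 1) := by
    refine monotoneOn_of_hasDerivWithinAt_nonneg (convex_Ici 1)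
      (fun s hs => (hderiv s hs).continuousAt.continuousWithinAt)
      (fun s hs => (hderiv s (interior_subset hs)).hasDerivWithinAt) fun s hs => ?_
    rw [interior_Ici] at hs
    linarith [mul_sub_one_div_mul_affine_le (le_of_lt hs) hv0 hv1]
  have := hmono self_mem_Ici ht ht
  simp only [sub_self, mul_one, sub_add_cancel, log_one, mul_zero, ne_eq, OfNat.ofNat_ne_zero,
    not_false_eq_true, zero_pow, zero_div] at this
  linarith

theorem stmt5 (t v : ℝ) (ht : 1 ≤ t) (hv0 : 0 ≤ v) (hv1 : v ≤ 1) :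
    ((1 - v) + v * t) / t ^ v ≤ Real.exp (v * (1 - v) * (t - 1) ^ 2 / 2) := by
  have ht0 : 0 < t := by linarith
  have hq : 0 < 1 - v + v * t := by nlinarith
  calc ((1 - v) + v * t) / t ^ v = exp (log (1 - v + v * t) - v * log t) := by
        rw [exp_sub, exp_log hq, rpow_def_of_pos ht0, mul_comm (log t)]
    _ ≤ exp (v * (1 - v) * (t - 1) ^ 2 / 2) :=
        exp_le_exp.2 (log_affine_sub_mul_log_le ht hv0 hv1)
end

section
/- For all real t with 0 < t ≤ 1 and all v with 0 ≤ v ≤ 1, t^(v+1)·exp(v·(1-v)·(t-1)²/2) ≤ 1. -/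
open Real

theorem stmt6 (t v : ℝ) (ht0 : 0 < t) (ht1 : t ≤ 1) (hv0 : 0 ≤ v) (hv1 : v ≤ 1) :
    t ^ (v + 1) * Real.exp (v * (1 - v) * (t - 1) ^ 2 / 2) ≤ 1 := by
  have hlog : Real.log t ≤ t - 1 := Real.log_le_sub_one_of_pos ht0
  have hkey : (v + 1) * Real.log t + v * (1 - v) * (t - 1) ^ 2 / 2 ≤ 0 := by
    nlinarith [mul_nonneg hv0 (sub_nonneg.2 hv1), sq_nonneg (t - 1),
      mul_nonneg (mul_nonneg hv0 (sub_nonneg.2 hv1)) (sub_nonneg.2 ht1),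
      mul_nonneg hv0 (sub_nonneg.2 ht1)]
  rw [Real.rpow_def_of_pos ht0, ← Real.exp_add, Real.exp_le_one_iff]
  linarith
end

section
/- For all real t with 0 < t ≤ 1 and all v with 0 ≤ v ≤ 1, we have 1 + (v·(1-v)·(t-1)²/2)·((t+1)/2)^(-v-1) ≤ ((1-v) + v·t)/t^v ≤ 1 + (v·(1-v)·(t-1)²/2)·t^(-v-1). -/
/-! With `g y = ((1 - v) + v * y) * y ^ (-v)` we have `g 1 = 1` and
`g' y = v (1 - v) (y - 1) y ^ (-v - 1)`, so each bound follows by showing that its difference with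
`g` is antitone on `[t, 1]`. For the upper bound the derivative of that difference is
`-v (1 - v) (1 + v) (1 - y)² y ^ (-v - 2) / 2`; for the lower bound its sign comes from the tangent
line of the convex function `y ↦ y ^ (-v - 1)` at the midpoint `(y + 1) / 2`, evaluated at `y`. -/

open Real Set

theorem one_add_mul_self_le_rpow_one_add_of_le_neg_one {s : ℝ} (hs : -1 < s) {p : ℝ}
    (hp : p ≤ -1) : 1 + p * s ≤ (1 + s) ^ p := by
  have h1s : 0 < 1 + s := by linarith
  have hb := one_add_mul_self_le_rpow_one_add (s := (1 + s)⁻¹ - 1) (by linarith [inv_pos.2 h1s])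
    (p := -p) (by linarith)
  rw [add_sub_cancel, inv_rpow h1s.le, ← rpow_neg h1s.le, neg_neg] at hb
  have hsq : 0 ≤ (1 + s)⁻¹ - 1 + s := by
    rw [show (1 + s)⁻¹ - 1 + s = s ^ 2 / (1 + s) by field_simp; ring]
    positivity
  nlinarith

theorem rpow_tangent_le_of_le_neg_one {p x m : ℝ} (hp : p ≤ -1) (hx : 0 < x) (hm : 0 < m) :
    m ^ p + p * m ^ (p - 1) * (x - m) ≤ x ^ p := by
  have hb := one_add_mul_self_le_rpow_one_add_of_le_neg_one (s := x / m - 1)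
    (by have := div_pos hx hm; linarith) hp
  rw [add_sub_cancel, div_rpow hx.le hm.le, le_div_iff₀ (rpow_pos_of_pos hm p)] at hb
  calc m ^ p + p * m ^ (p - 1) * (x - m) = (1 + p * (x / m - 1)) * m ^ p := by
        rw [rpow_sub_one hm.ne']; field_simp
    _ ≤ x ^ p := hb

theorem le_of_hasDerivAt_nonpos {f f' : ℝ → ℝ} {a b : ℝ} (hab : a ≤ b)
    (hf : ∀ x ∈ Icc a b, HasDerivAt f (f' x) x) (hf' : ∀ x ∈ Ioo a b, f' x ≤ 0) :
    f b ≤ f a := by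
  refine antitoneOn_of_hasDerivWithinAt_nonpos (f' := f') (convex_Icc a b)
    (fun x hx ↦ (hf x hx).continuousAt.continuousWithinAt) (fun x hx ↦ ?_) (fun x hx ↦ ?_)
    ⟨le_rfl, hab⟩ ⟨hab, le_rfl⟩ hab
  · rw [interior_Icc] at hx ⊢
    exact (hf x (Ioo_subset_Icc_self hx)).hasDerivWithinAt
  · rw [interior_Icc] at hx
    exact hf' x hx

theorem hasDerivAt_weighted_mean_mul_rpow_neg (v : ℝ) {x : ℝ} (hx : 0 < x) :
    HasDerivAt (fun y ↦ ((1 - v) + v * y) * y ^ (-v))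
      (v * (1 - v) * (x - 1) * x ^ (-v - 1)) x := by
  have h : HasDerivAt (fun y ↦ ((1 - v) + v * y) * y ^ (-v))
      (v * x ^ (-v) + ((1 - v) + v * x) * (-v * x ^ (-v - 1))) x :=
    ((((hasDerivAt_id x).const_mul v).const_add (1 - v)).congr_deriv (mul_one v)).mul
      (hasDerivAt_rpow_const (Or.inl hx.ne'))
  refine h.congr_deriv ?_
  rw [show -v = -v - 1 + 1 by ring, rpow_add_one hx.ne', show -v - 1 + 1 - 1 = -v - 1 by ring]
  ring

theorem hasDerivAt_one_sub_sq_mul_rpow {h : ℝ → ℝ} {h' x : ℝ} (p : ℝ)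
    (hh : HasDerivAt h h' x) (hx : 0 < h x) :
    HasDerivAt (fun y ↦ (1 - y) ^ 2 * h y ^ p)
      (-2 * (1 - x) * h x ^ p + (1 - x) ^ 2 * (h' * p * h x ^ (p - 1))) x := by
  refine ((((hasDerivAt_id x).const_sub 1).pow 2).mul
    (hh.rpow_const (Or.inl hx.ne'))).congr_deriv ?_
  simp only [id, Pi.pow_apply]
  ring

theorem one_add_mul_rpow_midpoint_le_weighted_mean_mul_rpow_neg {t v : ℝ} (ht0 : 0 < t)
    (ht1 : t ≤ 1) (hv0 : 0 ≤ v) (hv1 : v ≤ 1) :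
    1 + (v * (1 - v) * (t - 1) ^ 2 / 2) * ((t + 1) / 2) ^ (-v - 1) ≤
      ((1 - v) + v * t) * t ^ (-v) := by
  let F := fun y : ℝ ↦ ((1 - v) + v * y) * y ^ (-v) -
    v * (1 - v) / 2 * ((1 - y) ^ 2 * ((y + 1) / 2) ^ (-v - 1))
  have hF : ∀ x ∈ Icc t 1, HasDerivAt F (v * (1 - v) * (x - 1) * x ^ (-v - 1) -
      v * (1 - v) / 2 * (-2 * (1 - x) * ((x + 1) / 2) ^ (-v - 1) +
        (1 - x) ^ 2 * (1 / 2 * (-v - 1) * ((x + 1) / 2) ^ (-v - 1 - 1)))) x := fun x hx ↦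
    (hasDerivAt_weighted_mean_mul_rpow_neg v (ht0.trans_le hx.1)).sub
      ((hasDerivAt_one_sub_sq_mul_rpow (-v - 1) (((hasDerivAt_id x).add_const 1).div_const 2)
        (by simp only [id]; linarith [hx.1])).const_mul _)
  have hmono := le_of_hasDerivAt_nonpos ht1 hF fun x hx ↦ by
    have hm : 0 < (x + 1) / 2 := by linarith [hx.1]
    have h1x : 0 ≤ 1 - x := by linarith [hx.2]
    have htan := rpow_tangent_le_of_le_neg_one (p := -v - 1) (by linarith) (ht0.trans hx.1) hm
    have hM : 0 ≤ ((x + 1) / 2) ^ (-v - 1 - 1) := rpow_nonneg hm.le _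
    have hbracket : 0 ≤ x ^ (-v - 1) - ((x + 1) / 2) ^ (-v - 1) +
        (1 - x) * (-v - 1) * ((x + 1) / 2) ^ (-v - 1 - 1) / 4 := by
      nlinarith [mul_nonneg (mul_nonneg (by linarith : 0 ≤ v + 1) hM) h1x]
    have hc : 0 ≤ v * (1 - v) * (1 - x) := mul_nonneg (mul_nonneg hv0 (by linarith)) h1x
    nlinarith [mul_nonneg hc hbracket]
  have hF1 : F 1 = 1 := by simp [F]
  simp only [F, hF1] at hmono
  linarith

theorem weighted_mean_mul_rpow_neg_le_one_add_mul_rpow {t v : ℝ} (ht0 : 0 < t) (ht1 : t ≤ 1)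
    (hv0 : 0 ≤ v) (hv1 : v ≤ 1) :
    ((1 - v) + v * t) * t ^ (-v) ≤ 1 + (v * (1 - v) * (t - 1) ^ 2 / 2) * t ^ (-v - 1) := by
  let G := fun y : ℝ ↦ v * (1 - v) / 2 * ((1 - y) ^ 2 * y ^ (-v - 1)) -
    ((1 - v) + v * y) * y ^ (-v)
  have hG : ∀ x ∈ Icc t 1, HasDerivAt G (v * (1 - v) / 2 * (-2 * (1 - x) * x ^ (-v - 1) +
      (1 - x) ^ 2 * (1 * (-v - 1) * x ^ (-v - 1 - 1))) -
        v * (1 - v) * (x - 1) * x ^ (-v - 1)) x := fun x hx ↦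
    have hx0 : 0 < x := ht0.trans_le hx.1
    ((hasDerivAt_one_sub_sq_mul_rpow (-v - 1) (hasDerivAt_id x) hx0).const_mul _).sub
      (hasDerivAt_weighted_mean_mul_rpow_neg v hx0)
  have hmono := le_of_hasDerivAt_nonpos ht1 hG fun x hx ↦ by
    have hc : 0 ≤ v * (1 - v) * (v + 1) * (1 - x) ^ 2 :=
      mul_nonneg (mul_nonneg (mul_nonneg hv0 (by linarith)) (by linarith)) (sq_nonneg _)
    nlinarith [mul_nonneg hc (rpow_nonneg (ht0.trans hx.1).le (-v - 1 - 1))]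
  have hG1 : G 1 = -1 := by simp [G]
  simp only [G, hG1] at hmono
  linarith

theorem stmt7 (t v : ℝ) (ht0 : 0 < t) (ht1 : t ≤ 1) (hv0 : 0 ≤ v) (hv1 : v ≤ 1) :
    1 + (v * (1 - v) * (t - 1) ^ 2 / 2) * ((t + 1) / 2) ^ (-v - 1) ≤ ((1 - v) + v * t) / t ^ v ∧
      ((1 - v) + v * t) / t ^ v ≤ 1 + (v * (1 - v) * (t - 1) ^ 2 / 2) * t ^ (-v - 1) := by
  rw [div_eq_mul_inv (1 - v + v * t), ← rpow_neg ht0.le]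
  exact ⟨one_add_mul_rpow_midpoint_le_weighted_mean_mul_rpow_neg ht0 ht1 hv0 hv1,
    weighted_mean_mul_rpow_neg_le_one_add_mul_rpow ht0 ht1 hv0 hv1⟩
end

section
/- For all real t with 0 < t ≤ 1 and all v with 0 ≤ v ≤ 1, 1 + (v·(1-v)·(t-1)²/2)·t^(-v-1) ≤ exp(v·(1-v)·(1/t - 1)²/2). -/
open Real

theorem stmt8 (t v : ℝ) (ht0 : 0 < t) (ht1 : t ≤ 1) (hv0 : 0 ≤ v) (hv1 : v ≤ 1) :
    1 + (v * (1 - v) * (t - 1) ^ 2 / 2) * t ^ (-v - 1) ≤ Real.exp (v * (1 - v) * (1 / t - 1) ^ 2 / 2) := by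
  have hA : 0 ≤ v * (1 - v) * (t - 1) ^ 2 / 2 := by
    have : 0 ≤ v * (1 - v) := mul_nonneg hv0 (by linarith)
    positivity
  have hpow : t ^ (-v - 1) ≤ t ^ (-2 : ℝ) :=
    Real.rpow_le_rpow_of_exponent_ge ht0 ht1 (by linarith)
  have h2 : t ^ (-2 : ℝ) = 1 / t ^ 2 := by
    rw [Real.rpow_neg ht0.le, Real.rpow_two]
    field_simp
  have hB : v * (1 - v) * (1 / t - 1) ^ 2 / 2
      = (v * (1 - v) * (t - 1) ^ 2 / 2) * (1 / t ^ 2) := by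
    field_simp
    ring
  calc 1 + (v * (1 - v) * (t - 1) ^ 2 / 2) * t ^ (-v - 1)
      ≤ 1 + (v * (1 - v) * (t - 1) ^ 2 / 2) * (1 / t ^ 2) := by
        have := mul_le_mul_of_nonneg_left hpow hA
        rw [h2] at this; linarith
    _ = v * (1 - v) * (1 / t - 1) ^ 2 / 2 + 1 := by rw [hB]; ring
    _ ≤ Real.exp (v * (1 - v) * (1 / t - 1) ^ 2 / 2) := Real.add_one_le_exp _
end

section
/- For all real t with 0 < t ≤ 1 and all v with 0 ≤ v ≤ 1, exp(v·(1-v)·(t-1)²/2) ≤ 1 + (v·(1-v)·(t-1)²/2)·((t+1)/2)^(-v-1). -/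
open Real

theorem stmt9 (t v : ℝ) (ht0 : 0 < t) (ht1 : t ≤ 1) (hv0 : 0 ≤ v) (hv1 : v ≤ 1) :
    Real.exp (v * (1 - v) * (t - 1) ^ 2 / 2) ≤ 1 + (v * (1 - v) * (t - 1) ^ 2 / 2) * ((t + 1) / 2) ^ (-v - 1) := by
  set x : ℝ := v * (1 - v) * (t - 1) ^ 2 / 2 with hx
  have hx0 : 0 ≤ x := by
    have : 0 ≤ v * (1 - v) * (t - 1) ^ 2 :=
      mul_nonneg (mul_nonneg hv0 (by linarith)) (sq_nonneg _)
    linarith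
  -- v(1-v) ≤ 1/4
  have hvv : v * (1 - v) ≤ 1 / 4 := by nlinarith [sq_nonneg (v - 1/2)]
  -- 2x ≤ 1 - t
  have h2x : 2 * x ≤ 1 - t := by
    have h1 : (t - 1) ^ 2 ≤ 1 - t := by nlinarith
    have h2 : v * (1 - v) * (t - 1) ^ 2 ≤ (1 - t) / 4 := by nlinarith [sq_nonneg (t - 1)]
    linarith
  have hxlt1 : x < 1 := by linarith
  -- exp x ≤ 1/(1-x)
  have hexp : Real.exp x ≤ 1 / (1 - x) := by
    have h := Real.add_one_le_exp (-x)
    have hpos : (0:ℝ) < 1 - x := by linarith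
    rw [le_div_iff₀ hpos]
    have hme : 0 < Real.exp (-x) := Real.exp_pos _
    calc Real.exp x * (1 - x) ≤ Real.exp x * Real.exp (-x) := by
          apply mul_le_mul_of_nonneg_left (by linarith) (Real.exp_pos x).le
      _ = 1 := by rw [← Real.exp_add]; simp
  -- 1/(1-x) ≤ 2/(t+1)
  have hfrac : 1 / (1 - x) ≤ 2 / (t + 1) := by
    rw [div_le_div_iff₀ (by linarith) (by linarith)]
    linarith
  -- 2/(t+1) ≤ ((t+1)/2)^(-v-1)
  have hbase0 : (0:ℝ) < (t + 1) / 2 := by linarith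
  have hbase1 : (t + 1) / 2 ≤ 1 := by linarith
  have hrpow : 2 / (t + 1) ≤ ((t + 1) / 2) ^ (-v - 1 : ℝ) := by
    have h := Real.rpow_le_rpow_of_exponent_ge hbase0 hbase1 (show -v - 1 ≤ -1 by linarith)
    rwa [Real.rpow_neg_one, show ((t+1)/2)⁻¹ = 2/(t+1) by field_simp] at h
  have hcx : Real.exp x ≤ ((t + 1) / 2) ^ (-v - 1 : ℝ) := le_trans hexp (le_trans hfrac hrpow)
  -- exp x ≤ 1 + x exp x
  have hkey : Real.exp x ≤ 1 + x * Real.exp x := by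
    have h := Real.add_one_le_exp (-x)
    have h1 : Real.exp x * Real.exp (-x) = 1 := by rw [← Real.exp_add]; simp
    have h2 : Real.exp x * (-x + 1) ≤ Real.exp x * Real.exp (-x) :=
      mul_le_mul_of_nonneg_left h (Real.exp_pos x).le
    nlinarith [Real.exp_pos x]
  calc Real.exp x ≤ 1 + x * Real.exp x := hkey
    _ ≤ 1 + x * ((t + 1) / 2) ^ (-v - 1 : ℝ) := by
        have := mul_le_mul_of_nonneg_left hcx hx0
        linarith
end

section
/- For all real t > 0 and all v with 0 ≤ v ≤ 1, ((1-v) + v·t)/t^v ≤ 1 + v·(1-v)·(t-1)²/t. -/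
open Real

theorem stmt11 (t v : ℝ) (ht : 0 < t) (hv0 : 0 ≤ v) (hv1 : v ≤ 1) :
    ((1 - v) + v * t) / t ^ v ≤ 1 + v * (1 - v) * (t - 1) ^ 2 / t := by
  have hAM : t ^ (1 - v) * 1 ^ v ≤ (1 - v) * t + v * 1 :=
    Real.geom_mean_le_arith_mean2_weighted (by linarith) hv0 ht.le zero_le_one (by ring)
  have h1 : t ^ (1 - v) ≤ (1 - v) * t + v := by simpa using hAM
  have hpow : (0:ℝ) < t ^ v := Real.rpow_pos_of_pos ht v
  have hpow' : (0:ℝ) < t ^ (1 - v) := Real.rpow_pos_of_pos ht (1 - v)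
  have hmul : t ^ v * t ^ (1 - v) = t := by
    rw [← Real.rpow_add ht]; simp
  rw [div_le_iff₀ hpow]
  have hnum : (0:ℝ) ≤ (1 - v) + v * t := by nlinarith
  calc (1 - v) + v * t = ((1 - v) + v * t) * t / t := by field_simp
    _ = ((1 - v) + v * t) * (t ^ v * t ^ (1 - v)) / t := by rw [hmul]
    _ ≤ ((1 - v) + v * t) * (t ^ v * ((1 - v) * t + v)) / t := by
        gcongr
    _ = (1 + v * (1 - v) * (t - 1) ^ 2 / t) * t ^ v := by field_simp; ring
end

section
/- For all real t > 0, all v with 0 ≤ v ≤ 1, and all r with 0 < r ≤ 1, we have ((1-v) + v·t)/t^v ≤ (1 + r·v·(1-v)·(t-1)²/t)^(1/r). -/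
open Real

theorem stmt13 (t v r : ℝ) (ht : 0 < t) (hv0 : 0 ≤ v) (hv1 : v ≤ 1) (hr0 : 0 < r) (hr1 : r ≤ 1) :
    ((1 - v) + v * t) / t ^ v ≤ (1 + r * (v * (1 - v) * (t - 1) ^ 2 / t)) ^ (1 / r) := by
  set x : ℝ := v * (1 - v) * (t - 1) ^ 2 / t with hx
  have hx0 : 0 ≤ x := by
    exact div_nonneg (mul_nonneg (mul_nonneg hv0 (by linarith)) (sq_nonneg _)) ht.le
  -- Step 1: 1 + x ≤ (1 + r*x)^(1/r)
  have h1 : 1 + x ≤ (1 + r * x) ^ (1 / r) := by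
    have := one_add_mul_self_le_rpow_one_add (s := r * x)
      (by nlinarith) (p := 1 / r) ((one_le_div hr0).mpr hr1)
    calc 1 + x = 1 + 1 / r * (r * x) := by field_simp
    _ ≤ (1 + r * x) ^ (1 / r) := this
  -- Step 2: LHS ≤ 1 + x
  have htv : t ^ (1 - v) ≤ (1 - v) * (t - 1) + 1 := by
    have := rpow_one_add_le_one_add_mul_self (s := t - 1) (by linarith)
      (p := 1 - v) (by linarith) (by linarith)
    have e : (1:ℝ) + (t - 1) = t := by ring
    rw [e] at this
    linarith
  have hpow : (0:ℝ) < t ^ v := rpow_pos_of_pos ht v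
  have hpow1 : (0:ℝ) < t ^ (1 - v) := rpow_pos_of_pos ht _
  have hmul : t ^ v * t ^ (1 - v) = t := by
    rw [← rpow_add ht]; simp
  have hd : (0:ℝ) < (1 - v) * (t - 1) + 1 := lt_of_lt_of_le hpow1 htv
  have h2 : ((1 - v) + v * t) / t ^ v ≤ 1 + x := by
    rw [div_le_iff₀ hpow]
    have key : t ^ v ≥ t / ((1 - v) * (t - 1) + 1) := by
      rw [ge_iff_le, div_le_iff₀ hd]
      calc t = t ^ v * t ^ (1 - v) := hmul.symm
      _ ≤ t ^ v * ((1 - v) * (t - 1) + 1) := by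
          exact mul_le_mul_of_nonneg_left htv hpow.le
    have heq : (1 + x) * (t / ((1 - v) * (t - 1) + 1)) = (1 - v) + v * t := by
      rw [hx]; field_simp; ring
    calc (1 - v) + v * t = (1 + x) * (t / ((1 - v) * (t - 1) + 1)) := heq.symm
    _ ≤ (1 + x) * t ^ v := by
        apply mul_le_mul_of_nonneg_left key (by linarith)
  linarith
end

section
/- For all real t with 0 < t ≤ 1 and all v with 0 ≤ v ≤ 1 such that v·(1-v)·(t-1)²/2 < 1, we have 1/(1 - v·(1-v)·(t-1)²/2) ≤ ((1-v) + v·t)/t^v. -/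
open Real

/-- key sub-lemma: `1 + (1-v)(1-s) ≤ s^(v-1)` for `0 < s ≤ 1`, `0 ≤ v ≤ 1`. -/
lemma aux_pow_lb (s v : ℝ) (hs0 : 0 < s) (hs1 : s ≤ 1) (hv0 : 0 ≤ v) (hv1 : v ≤ 1) :
    1 + (1 - v) * (1 - s) ≤ s ^ (v - 1) := by
  have hamgm : s ^ (1 - v) ≤ (1 - v) * s + v * 1 := by
    have := Real.geom_mean_le_arith_mean2_weighted (by linarith : (0:ℝ) ≤ 1 - v) hv0
      hs0.le zero_le_one (by ring)
    simpa using this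
  have hx : 0 ≤ (1 - v) * (1 - s) := by nlinarith
  have hkey : (1 + (1 - v) * (1 - s)) * s ^ (1 - v) ≤ 1 := by
    calc (1 + (1 - v) * (1 - s)) * s ^ (1 - v)
        ≤ (1 + (1 - v) * (1 - s)) * ((1 - v) * s + v * 1) := by
          apply mul_le_mul_of_nonneg_left hamgm; linarith
      _ ≤ 1 := by nlinarith [sq_nonneg ((1 - v) * (1 - s))]
  have hpow : (0:ℝ) < s ^ (1 - v) := Real.rpow_pos_of_pos hs0 _
  have : 1 + (1 - v) * (1 - s) ≤ 1 / s ^ (1 - v) := by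
    rw [le_div_iff₀ hpow]; linarith
  calc 1 + (1 - v) * (1 - s) ≤ 1 / s ^ (1 - v) := this
    _ = s ^ (v - 1) := by
        rw [show v - 1 = -(1 - v) by ring, Real.rpow_neg hs0.le, one_div]

lemma aux_taylor (t v : ℝ) (ht0 : 0 < t) (ht1 : t ≤ 1) (hv0 : 0 ≤ v) (hv1 : v ≤ 1) :
    t ^ v ≤ 1 + v * (t - 1) - v * (1 - v) * (t - 1) ^ 2 / 2 := by
  set f : ℝ → ℝ := fun s => s ^ v - (1 + v * (s - 1) - v * (1 - v) * (s - 1) ^ 2 / 2) with hf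
  have hderiv : ∀ s ∈ interior (Set.Icc t 1), HasDerivAt f
      (v * s ^ (v - 1) - (v - v * (1 - v) * (s - 1))) s := by
    intro s hs
    rw [interior_Icc] at hs
    have hs0 : (0:ℝ) < s := lt_of_lt_of_le ht0 hs.1.le
    have h1 : HasDerivAt (fun s : ℝ => s ^ v) (v * s ^ (v - 1)) s := by
      simpa using Real.hasDerivAt_rpow_const (x := s) (p := v) (Or.inl hs0.ne')
    have h2 : HasDerivAt (fun s : ℝ => 1 + v * (s - 1) - v * (1 - v) * (s - 1) ^ 2 / 2)
        (v - v * (1 - v) * (s - 1)) s := by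
      have : HasDerivAt (fun s : ℝ => 1 + v * (s - 1) - v * (1 - v) * (s - 1) ^ 2 / 2)
          (0 + v * 1 - v * (1 - v) * (2 * (s - 1) ^ 1 * 1) / 2) s := by
        apply HasDerivAt.sub
        · exact (hasDerivAt_const s 1).add (((hasDerivAt_id s).sub_const 1).const_mul v)
        · exact ((((hasDerivAt_id s).sub_const 1).pow 2).const_mul _).div_const 2
      convert this using 1; ring
    exact h1.sub h2
  have hcont : ContinuousOn f (Set.Icc t 1) := by
    apply ContinuousOn.sub
    · intro s hs
      exact (Real.continuousAt_rpow_const s v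
        (Or.inl (lt_of_lt_of_le ht0 hs.1).ne')).continuousWithinAt
    · fun_prop
  have hmono : MonotoneOn f (Set.Icc t 1) := by
    apply monotoneOn_of_deriv_nonneg (convex_Icc t 1) hcont
    · intro s hs
      exact (hderiv s hs).differentiableAt.differentiableWithinAt
    · intro s hs
      rw [(hderiv s hs).deriv]
      rw [interior_Icc] at hs
      have hs0 : (0:ℝ) < s := lt_of_lt_of_le ht0 hs.1.le
      have hlb := aux_pow_lb s v hs0 hs.2.le hv0 hv1
      have : v * (1 + (1 - v) * (1 - s)) ≤ v * s ^ (v - 1) :=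
        mul_le_mul_of_nonneg_left hlb hv0
      nlinarith
  have := hmono (Set.left_mem_Icc.2 ht1) (Set.right_mem_Icc.2 ht1) ht1
  have hf1 : f 1 = 0 := by simp [hf]
  have hft : f t = t ^ v - (1 + v * (t - 1) - v * (1 - v) * (t - 1) ^ 2 / 2) := rfl
  rw [hf1] at this
  rw [hft] at this
  linarith

theorem stmt15 (t v : ℝ) (ht0 : 0 < t) (ht1 : t ≤ 1) (hv0 : 0 ≤ v) (hv1 : v ≤ 1)
    (h : v * (1 - v) * (t - 1) ^ 2 / 2 < 1) :
    1 / (1 - v * (1 - v) * (t - 1) ^ 2 / 2) ≤ ((1 - v) + v * t) / t ^ v := by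
  have hpow : (0:ℝ) < t ^ v := Real.rpow_pos_of_pos ht0 v
  have hc0 : 0 ≤ v * (1 - v) * (t - 1) ^ 2 / 2 := by
    have : (0:ℝ) ≤ v * (1 - v) := mul_nonneg hv0 (by linarith)
    positivity
  have hd : (0:ℝ) < 1 - v * (1 - v) * (t - 1) ^ 2 / 2 := by linarith
  rw [div_le_div_iff₀ hd hpow]
  have hT := aux_taylor t v ht0 ht1 hv0 hv1
  nlinarith [mul_nonneg (mul_nonneg hv0 (by linarith : (0:ℝ) ≤ 1 - v)) (sq_nonneg (t-1)),
    mul_nonneg hv0 (by linarith : (0:ℝ) ≤ 1 - t)]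
end

section
/- For all real t with 0 < t ≤ 1 and all v with 0 ≤ v ≤ 1, ((1-v) + v·t)/t^v ≤ 1 + (v·(1-v)/2)·(1/t - 1)². -/
/-! Put `x = 1 / t ≥ 1` and `w = 1 - v`. After multiplying by `t ^ v = t * x ^ w` the claim becomes
`1 - w + w * x ≤ (1 + c * (x - 1) ^ 2) * x ^ w` with `c = w * (1 - w) / 2`. The second-order Bernoulli
bound `x ^ w ≥ 1 + w * (x - 1) - c * (x - 1) ^ 2`, together with `x ^ w ≥ 1`, gives exactly this. -/

open Real Set

lemma one_sub_mul_le_one_add_rpow_neg {s q : ℝ} (hs : -1 < s) (hq0 : 0 ≤ q) (hq1 : q ≤ 1) :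
    1 - q * s ≤ (1 + s) ^ (-q) := by
  have hpos : 0 < 1 + s := by linarith
  have hqs : 0 < 1 + q * s := by
    rcases hq1.lt_or_eq with hq1 | rfl
    · nlinarith [mul_nonneg hq0 hpos.le]
    · linarith
  calc 1 - q * s ≤ (1 + q * s)⁻¹ := by
        rw [← one_div, le_div_iff₀ hqs]
        nlinarith [sq_nonneg (q * s)]
    _ ≤ ((1 + s) ^ q)⁻¹ :=
        inv_anti₀ (rpow_pos_of_pos hpos q) (rpow_one_add_le_one_add_mul_self hs.le hq0 hq1)
    _ = (1 + s) ^ (-q) := (rpow_neg hpos.le q).symm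

lemma one_add_mul_sub_sq_le_one_add_rpow {w u : ℝ} (hw0 : 0 ≤ w) (hw1 : w ≤ 1) (hu : 0 ≤ u) :
    1 + w * u - w * (1 - w) / 2 * u ^ 2 ≤ (1 + u) ^ w := by
  set g : ℝ → ℝ := fun s => (1 + s) ^ w - w * s + w * (1 - w) / 2 * s ^ 2
  have hg' : ∀ s ∈ interior (Ici (0 : ℝ)), HasDerivWithinAt g
      (w * ((1 + s) ^ (w - 1) - (1 - (1 - w) * s))) (interior (Ici 0)) s := by
    intro s hs
    rw [interior_Ici] at hs
    have h1s : 1 + s ≠ 0 := by linarith [mem_Ioi.1 hs]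
    have hg := ((((hasDerivAt_id s).const_add 1).rpow_const (p := w) (Or.inl h1s)).sub
      ((hasDerivAt_id s).const_mul w)).add ((hasDerivAt_pow 2 s).const_mul (w * (1 - w) / 2))
    exact (hg.congr_deriv (by simp; ring)).hasDerivWithinAt
  have hmono : MonotoneOn g (Ici 0) := by
    refine monotoneOn_of_hasDerivWithinAt_nonneg (convex_Ici 0) ?_ hg' fun s hs => ?_
    · exact ((continuousOn_const.add continuousOn_id).rpow_const fun _ _ => Or.inr hw0).sub
        (by fun_prop) |>.add (by fun_prop)
    · rw [interior_Ici] at hs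
      have h := one_sub_mul_le_one_add_rpow_neg (by linarith [mem_Ioi.1 hs] : -1 < s)
        (sub_nonneg.2 hw1) (by linarith : 1 - w ≤ 1)
      rw [neg_sub] at h
      exact mul_nonneg hw0 (sub_nonneg.2 h)
  have := hmono (mem_Ici.2 le_rfl) hu hu
  simp only [g] at this
  norm_num at this
  linarith

lemma one_sub_add_mul_le_one_add_sq_mul_rpow {w x : ℝ} (hw0 : 0 ≤ w) (hw1 : w ≤ 1) (hx : 1 ≤ x) :
    1 - w + w * x ≤ (1 + w * (1 - w) / 2 * (x - 1) ^ 2) * x ^ w := by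
  have hbernoulli := one_add_mul_sub_sq_le_one_add_rpow hw0 hw1 (sub_nonneg.2 hx)
  rw [add_sub_cancel] at hbernoulli
  have hc : 0 ≤ w * (1 - w) / 2 * (x - 1) ^ 2 :=
    mul_nonneg (by nlinarith) (sq_nonneg _)
  nlinarith [one_le_rpow hx hw0]

theorem stmt16 (t v : ℝ) (ht0 : 0 < t) (ht1 : t ≤ 1) (hv0 : 0 ≤ v) (hv1 : v ≤ 1) :
    ((1 - v) + v * t) / t ^ v ≤ 1 + (v * (1 - v) / 2) * (1 / t - 1) ^ 2 := by
  have key := one_sub_add_mul_le_one_add_sq_mul_rpow (sub_nonneg.2 hv1) (by linarith : 1 - v ≤ 1)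
    (one_le_inv₀ ht0 |>.2 ht1)
  have htv : t ^ v = t * t⁻¹ ^ (1 - v) := by
    rw [inv_rpow ht0.le, ← rpow_neg ht0.le, neg_sub, rpow_sub_one ht0.ne', mul_div_cancel₀ _ ht0.ne']
  rw [div_le_iff₀ (rpow_pos_of_pos ht0 v), htv, one_div]
  calc (1 - v) + v * t = t * (1 - (1 - v) + (1 - v) * t⁻¹) := by field_simp; ring
    _ ≤ t * ((1 + (1 - v) * (1 - (1 - v)) / 2 * (t⁻¹ - 1) ^ 2) * t⁻¹ ^ (1 - v)) := by gcongr
    _ = (1 + v * (1 - v) / 2 * (t⁻¹ - 1) ^ 2) * (t * t⁻¹ ^ (1 - v)) := by ring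
end

section
/- For all real t ≥ 1 and all v with 0 ≤ v ≤ 1, we have 1/(1 - (v·(1-v)/2)·(1/t - 1)²) ≤ ((1-v) + v·t)/t^v. -/
/-!
Clearing denominators, the claim becomes `t ^ v ≤ A * (1 - c * (1/t - 1) ^ 2)` with
`A = 1 - v + v t ≤ t` and `c = v (1 - v) / 2`. Since `t * (1/t - 1) ^ 2 = t - 2 + t⁻¹`, it suffices
to prove the refined Young inequality `t ^ v ≤ 1 + v (t - 1) - c (t - 2 + t⁻¹)` for `t ≥ 1`.
The gap in that inequality vanishes at `t = 1`, and its derivative is nonnegative by the weighted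
AM-GM inequality `y ^ (v - 1) ≤ (1 + v)/2 + (1 - v)/2 * y⁻²`.
-/

open Real Set

lemma rpow_sub_one_le_mean_inv_sq {y v : ℝ} (hy : 0 < y) (hv₀ : -1 ≤ v) (hv₁ : v ≤ 1) :
    y ^ (v - 1) ≤ (1 + v) / 2 + (1 - v) / 2 * (y ^ 2)⁻¹ := by
  have amgm := geom_mean_le_arith_mean2_weighted (p₁ := (y ^ 2)⁻¹) (p₂ := 1)
    (by linarith : 0 ≤ (1 - v) / 2) (by linarith : 0 ≤ (1 + v) / 2) (by positivity) zero_le_one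
    (by ring)
  have hpow : ((y ^ 2)⁻¹) ^ ((1 - v) / 2) = y ^ (v - 1) := by
    rw [inv_rpow (by positivity), ← rpow_natCast_mul hy.le, ← rpow_neg hy.le]
    push_cast
    ring_nf
  rw [hpow, one_rpow, mul_one] at amgm
  linarith

noncomputable def refinedYoungGap (v y : ℝ) : ℝ :=
  1 + v * (y - 1) - v * (1 - v) / 2 * (y - 2 + y⁻¹) - y ^ v

lemma hasDerivAt_refinedYoungGap (v : ℝ) {y : ℝ} (hy : 0 < y) :
    HasDerivAt (refinedYoungGap v)
      (v - v * (1 - v) / 2 * (1 - (y ^ 2)⁻¹) - v * y ^ (v - 1)) y := by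
  have hlin : HasDerivAt (fun z : ℝ => 1 + v * (z - 1)) v y := by
    simpa using (((hasDerivAt_id y).sub_const 1).const_mul v).const_add 1
  have hquad : HasDerivAt (fun z : ℝ => z - 2 + z⁻¹) (1 - (y ^ 2)⁻¹) y :=
    (((hasDerivAt_id y).sub_const 2).add (hasDerivAt_inv hy.ne')).congr_deriv (by ring)
  exact (hlin.sub (hquad.const_mul _)).sub (hasDerivAt_rpow_const (Or.inl hy.ne'))

lemma monotoneOn_refinedYoungGap {v : ℝ} (hv₀ : 0 ≤ v) (hv₁ : v ≤ 1) :
    MonotoneOn (refinedYoungGap v) (Ici 1) := by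
  have hderiv : ∀ y ∈ Ici (1 : ℝ), HasDerivAt (refinedYoungGap v)
      (v - v * (1 - v) / 2 * (1 - (y ^ 2)⁻¹) - v * y ^ (v - 1)) y :=
    fun y hy => hasDerivAt_refinedYoungGap v (zero_lt_one.trans_le hy)
  refine monotoneOn_of_hasDerivWithinAt_nonneg (convex_Ici 1)
    (fun y hy => (hderiv y hy).continuousAt.continuousWithinAt)
    (fun y hy => (hderiv y (interior_subset hy)).hasDerivWithinAt) fun y hy => ?_
  have hy : 0 < y := zero_lt_one.trans_le (interior_subset hy : y ∈ Ici 1)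
  have amgm := mul_le_mul_of_nonneg_left
    (rpow_sub_one_le_mean_inv_sq hy (by linarith) hv₁) hv₀
  linarith

lemma rpow_le_refinedYoung {t v : ℝ} (ht : 1 ≤ t) (hv₀ : 0 ≤ v) (hv₁ : v ≤ 1) :
    t ^ v ≤ 1 + v * (t - 1) - v * (1 - v) / 2 * (t - 2 + t⁻¹) := by
  have hmono := monotoneOn_refinedYoungGap hv₀ hv₁ self_mem_Ici ht ht
  have hgap₁ : refinedYoungGap v 1 = 0 := by norm_num [refinedYoungGap]
  rw [hgap₁, refinedYoungGap] at hmono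
  linarith

theorem stmt17 (t v : ℝ) (ht : 1 ≤ t) (hv0 : 0 ≤ v) (hv1 : v ≤ 1) :
    1 / (1 - (v * (1 - v) / 2) * (1 / t - 1) ^ 2) ≤ ((1 - v) + v * t) / t ^ v := by
  have ht₀ : 0 < t := zero_lt_one.trans_le ht
  have hc₀ : 0 ≤ v * (1 - v) / 2 := by nlinarith
  have hc₁ : v * (1 - v) / 2 < 1 := by nlinarith
  have hq : (1 / t - 1) ^ 2 ≤ 1 := by
    have : 1 / t ≤ 1 := (div_le_one ht₀).2 ht
    nlinarith [one_div_pos.2 ht₀]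
  have hden : 0 < 1 - v * (1 - v) / 2 * (1 / t - 1) ^ 2 := by nlinarith [sq_nonneg (1 / t - 1)]
  have hmean : (1 - v) + v * t ≤ t := by nlinarith
  have hsq : t * (1 / t - 1) ^ 2 = t - 2 + t⁻¹ := by field_simp; ring
  rw [div_le_div_iff₀ hden (rpow_pos_of_pos ht₀ v), one_mul]
  have hscale := mul_le_mul_of_nonneg_right hmean
    (mul_nonneg hc₀ (sq_nonneg (1 / t - 1)) : 0 ≤ v * (1 - v) / 2 * (1 / t - 1) ^ 2)
  nlinarith [rpow_le_refinedYoung ht hv0 hv1]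
end
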